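/- arXiv:1011.5496 — 4 statements merged into one kernel-verified Lean document; each statement's English description precedes it below -/
import Mathlib

section
/- Suppose p x y > 0 for all x ∈ 𝒳₁ and y ∈ 𝒳₂ (full support). Then any two distinct maximal independent sets W₁ and W₂ of the characteristic graph G_{X₁} are disjoint: W₁ ∩ W₂ = ∅. -/
/-- The characteristic graph `G_{X₁}` of `X₁` with respect to `X₂`, the joint weights `p`,
and the function `f`. -/
def charGraph {X1 X2 Z : Type*} (f : X1 → X2 → Z) (p : X1 → X2 → ℝ) : SimpleGraph X1 where
  Adj a b := a ≠ b ∧ ∃ y, 0 < p a y ∧ 0 < p b y ∧ f a y ≠ f b y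
  symm := by
    constructor
    rintro a b ⟨hab, y, h1, h2, h3⟩
    exact ⟨hab.symm, y, h2, h1, h3.symm⟩
  loopless := by
    constructor
    rintro a ⟨h, -⟩
    exact h rfl

/-- `W` is an independent set of the simple graph `G`. -/
def IsIndepSetOn {V : Type*} (G : SimpleGraph V) (W : Set V) : Prop :=
  ∀ a ∈ W, ∀ b ∈ W, ¬ G.Adj a b

/-- `W` is a maximal independent set of the simple graph `G`: it is independent and is not a
proper subset of any independent set. -/
def IsMaxIndepSet {V : Type*} (G : SimpleGraph V) (W : Set V) : Prop :=
  IsIndepSetOn G W ∧ ∀ W' : Set V, IsIndepSetOn G W' → W ⊆ W' → W' = W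

/-!
With full support the characteristic graph joins `a` and `b` exactly when the rows `f a` and
`f b` differ, so it is the complement of an equivalence relation and its independent sets are the
subsets of the classes of "having the same row". Two independent sets through a common vertex
therefore lie in one class, their union is independent, and maximality forces both to equal it.
-/

theorem IsMaxIndepSet.eq_of_isIndepSetOn_union {V : Type*} {G : SimpleGraph V} {W₁ W₂ : Set V}
    (hW₁ : IsMaxIndepSet G W₁) (hW₂ : IsMaxIndepSet G W₂) (h : IsIndepSetOn G (W₁ ∪ W₂)) :
    W₁ = W₂ :=
  (hW₁.2 _ h Set.subset_union_left).symm.trans (hW₂.2 _ h Set.subset_union_right)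

section FullSupport

variable {X1 X2 Z : Type*} {f : X1 → X2 → Z} {p : X1 → X2 → ℝ}

theorem charGraph_adj_iff_of_pos (hp : ∀ x y, 0 < p x y) {a b : X1} :
    (charGraph f p).Adj a b ↔ f a ≠ f b := by
  refine ⟨fun ⟨_, y, _, _, hy⟩ hab => hy (congrFun hab y), fun hab => ?_⟩
  obtain ⟨y, hy⟩ := Function.ne_iff.mp hab
  exact ⟨fun h => hab (h ▸ rfl), y, hp a y, hp b y, hy⟩

theorem isIndepSetOn_charGraph_iff_of_pos (hp : ∀ x y, 0 < p x y) {W : Set X1} :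
    IsIndepSetOn (charGraph f p) W ↔ ∀ a ∈ W, ∀ b ∈ W, f a = f b := by
  simp only [IsIndepSetOn, charGraph_adj_iff_of_pos hp, not_not]

theorem IsIndepSetOn.union_charGraph_of_pos (hp : ∀ x y, 0 < p x y) {W₁ W₂ : Set X1} {a : X1}
    (hW₁ : IsIndepSetOn (charGraph f p) W₁) (hW₂ : IsIndepSetOn (charGraph f p) W₂)
    (ha₁ : a ∈ W₁) (ha₂ : a ∈ W₂) : IsIndepSetOn (charGraph f p) (W₁ ∪ W₂) := by
  rw [isIndepSetOn_charGraph_iff_of_pos hp] at hW₁ hW₂ ⊢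
  have row_eq : ∀ b ∈ W₁ ∪ W₂, f b = f a := by
    rintro b (hb | hb)
    · exact hW₁ b hb a ha₁
    · exact hW₂ b hb a ha₂
  intro b hb c hc
  rw [row_eq b hb, row_eq c hc]

end FullSupport

theorem stmt1_general {X1 X2 Z : Type*}
    (f : X1 → X2 → Z) (p : X1 → X2 → ℝ) (hp : ∀ x y, 0 < p x y)
    (W₁ W₂ : Set X1) (hW₁ : IsMaxIndepSet (charGraph f p) W₁)
    (hW₂ : IsMaxIndepSet (charGraph f p) W₂) (hne : W₁ ≠ W₂) :
    W₁ ∩ W₂ = ∅ := by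
  refine Set.eq_empty_iff_forall_notMem.mpr fun a ⟨ha₁, ha₂⟩ => hne ?_
  exact hW₁.eq_of_isIndepSetOn_union hW₂ (hW₁.1.union_charGraph_of_pos hp hW₂.1 ha₁ ha₂)

/-- Under the full-support hypothesis, two distinct maximal independent sets of the
characteristic graph `G_{X₁}` are disjoint. -/
theorem stmt1 {X1 X2 Z : Type*} [Fintype X1] [Nonempty X1] [Fintype X2] [Nonempty X2]
    (f : X1 → X2 → Z) (p : X1 → X2 → ℝ) (hp : ∀ x y, 0 < p x y)
    (W₁ W₂ : Set X1) (hW₁ : IsMaxIndepSet (charGraph f p) W₁)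
    (hW₂ : IsMaxIndepSet (charGraph f p) W₂) (hne : W₁ ≠ W₂) :
    W₁ ∩ W₂ = ∅ :=
  stmt1_general f p hp W₁ W₂ hW₁ hW₂ hne
end

section
/- Let ι be a finite type and B : 𝒳₁ → ι a map such that: (i) whenever B a = B b, for every y ∈ 𝒳₂ with p a y > 0 and p b y > 0 one has f a y = f b y; and (ii) whenever B a ≠ B b, there exists y ∈ 𝒳₂ with p a y > 0, p b y > 0, and f a y ≠ f b y. Suppose further that the marginal weights q a = ∑_{y ∈ 𝒳₂} p a y are positive for all a ∈ 𝒳₁. Then B is a proper coloring of the characteristic graph G_{X₁}, and it is a minimum entropy coloring: for every finite type C and every proper coloring c : 𝒳₁ → C of G_{X₁}, H(c) ≥ H(B). -/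
/-- The entropy of a map `c : V → C` when the vertices of `V` carry weights `q`:
`H(c) = ∑_σ negMulLog (∑_{v : c v = σ} q v)`. -/
noncomputable def colorEntropy {V C : Type*} [Fintype V] [Fintype C] [DecidableEq C]
    (q : V → ℝ) (c : V → C) : ℝ :=
  ∑ σ : C, Real.negMulLog (∑ v : V, if c v = σ then q v else 0)

/-!
Condition (ii) forces every proper coloring `c` of the characteristic graph to refine `B`, so
`B = g ∘ c` for some `g`. Each color class of `B` is then a union of color classes of `c`, and
merging classes cannot increase entropy because `negMulLog` is subadditive on `[0, ∞)`.
-/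

open Finset Real Function

lemma Real.negMulLog_sum_le {α : Type*} (s : Finset α) (w : α → ℝ) (hw : ∀ a ∈ s, 0 ≤ w a) :
    negMulLog (∑ a ∈ s, w a) ≤ ∑ a ∈ s, negMulLog (w a) := by
  simp only [negMulLog, neg_mul, ← sum_neg_distrib, sum_mul]
  refine sum_le_sum fun a ha => neg_le_neg ?_
  rcases (hw a ha).eq_or_lt with h0 | h0
  · simp [← h0]
  · exact mul_le_mul_of_nonneg_left (log_le_log h0 (single_le_sum hw ha)) h0.le

section
variable {V C : Type*} [Fintype V] [Fintype C] [DecidableEq C]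

lemma sum_ite_comp_eq_sum_fiberwise {D : Type*} [DecidableEq D] (q : V → ℝ) (g : C → D)
    (c : V → C) (i : D) :
    (∑ v, if g (c v) = i then q v else 0) =
      ∑ σ with g σ = i, ∑ v, if c v = σ then q v else 0 := by
  rw [← sum_fiberwise univ c, sum_filter]
  refine sum_congr rfl fun σ _ => ?_
  split_ifs with h
  · rw [sum_filter]
    exact sum_congr rfl fun v _ => by split_ifs <;> simp_all
  · exact sum_eq_zero fun v hv => by simp_all

lemma colorEntropy_comp_le {D : Type*} [Fintype D] [DecidableEq D] {q : V → ℝ}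
    (hq : ∀ v, 0 ≤ q v) (g : C → D) (c : V → C) :
    colorEntropy q (g ∘ c) ≤ colorEntropy q c :=
  calc colorEntropy q (g ∘ c)
      = ∑ i, negMulLog (∑ σ with g σ = i, ∑ v, if c v = σ then q v else 0) := by
        simp only [colorEntropy, comp_apply, sum_ite_comp_eq_sum_fiberwise]
    _ ≤ ∑ i, ∑ σ with g σ = i, negMulLog (∑ v, if c v = σ then q v else 0) :=
        sum_le_sum fun i _ => negMulLog_sum_le _ _ fun σ _ =>
          sum_nonneg fun v _ => by split_ifs <;> simp [hq]
    _ = colorEntropy q c := sum_fiberwise _ _ _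

lemma colorEntropy_le_of_factorsThrough {ι : Type*} [Fintype ι] [DecidableEq ι] {q : V → ℝ}
    (hq : ∀ v, 0 ≤ q v) {B : V → ι} {c : V → C} (h : B.FactorsThrough c) :
    colorEntropy q B ≤ colorEntropy q c := by
  obtain _ | ⟨⟨v₀⟩⟩ := isEmpty_or_nonempty V
  · simp [colorEntropy]
  · have hB : extend c B (fun _ => B v₀) ∘ c = B := funext (h.extend_apply _)
    rw [← hB]
    exact colorEntropy_comp_le hq _ _
end

lemma factorsThrough_of_charGraph_coloring {X1 X2 Z ι C : Type*} {f : X1 → X2 → Z}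
    {p : X1 → X2 → ℝ} {B : X1 → ι}
    (hB : ∀ a b, B a ≠ B b → ∃ y, 0 < p a y ∧ 0 < p b y ∧ f a y ≠ f b y)
    {c : X1 → C} (hc : ∀ a b, (charGraph f p).Adj a b → c a ≠ c b) :
    B.FactorsThrough c := by
  intro a b hcab
  by_contra hBab
  exact hc a b ⟨fun hab => hBab (congrArg B hab), hB a b hBab⟩ hcab

theorem stmt6_general {X1 X2 Z : Type*} [Fintype X1]
    {ι : Type*} [Fintype ι] [DecidableEq ι]
    (f : X1 → X2 → Z) (p : X1 → X2 → ℝ)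
    (B : X1 → ι)
    (hB1 : ∀ a b, B a = B b → ∀ y, 0 < p a y → 0 < p b y → f a y = f b y)
    (hB2 : ∀ a b, B a ≠ B b → ∃ y, 0 < p a y ∧ 0 < p b y ∧ f a y ≠ f b y)
    (q : X1 → ℝ) (hqpos : ∀ a, 0 < q a) :
    (∀ a b, (charGraph f p).Adj a b → B a ≠ B b) ∧
    ∀ (C : Type) [Fintype C] [DecidableEq C] (c : X1 → C),
      (∀ a b, (charGraph f p).Adj a b → c a ≠ c b) →
      colorEntropy q c ≥ colorEntropy q B :=
  ⟨fun a b ⟨_, y, hay, hby, hf⟩ hBab => hf (hB1 a b hBab y hay hby),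
    fun _ _ _ _ hc => colorEntropy_le_of_factorsThrough (fun a => (hqpos a).le)
      (factorsThrough_of_charGraph_coloring hB2 hc)⟩

/-- A pairwise `X₁`-proper block map `B : X1 → ι` is a proper coloring of the characteristic
graph `G_{X₁}` and has minimum entropy among all proper colorings, with respect to positive
marginal weights `q a = ∑ y, p a y`. -/
theorem stmt6 {X1 X2 Z : Type*} [Fintype X1] [Nonempty X1] [Fintype X2] [Nonempty X2]
    {ι : Type*} [Fintype ι] [DecidableEq ι]
    (f : X1 → X2 → Z) (p : X1 → X2 → ℝ) (hp : ∀ x y, 0 ≤ p x y)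
    (B : X1 → ι)
    (hB1 : ∀ a b, B a = B b → ∀ y, 0 < p a y → 0 < p b y → f a y = f b y)
    (hB2 : ∀ a b, B a ≠ B b → ∃ y, 0 < p a y ∧ 0 < p b y ∧ f a y ≠ f b y)
    (q : X1 → ℝ) (hq : ∀ a, q a = ∑ y : X2, p a y) (hqpos : ∀ a, 0 < q a) :
    (∀ a b, (charGraph f p).Adj a b → B a ≠ B b) ∧
    ∀ (C : Type) [Fintype C] [DecidableEq C] (c : X1 → C),
      (∀ a b, (charGraph f p).Adj a b → c a ≠ c b) →
      colorEntropy q c ≥ colorEntropy q B :=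
  stmt6_general f p B hB1 hB2 q hqpos
end

section
/- Suppose each c_i : 𝒳 i → C_i is a proper coloring of the characteristic graph G_i and the colorings c_1, …, c_k satisfy the coloring connectivity condition (C.C.C.). Then there exists a function f̂ : (Π i, C_i) → 𝒵 such that f̂ (fun i ↦ c_i (x i)) = f x for every admissible point x. -/
/-- The characteristic graph `G_i` of the `i`-th source with respect to the other sources,
the joint weights `p`, and the function `f`: distinct `a, b : 𝒳 i` are adjacent iff there is
an admissible point `x` with `x i = a` such that `Function.update x i b` is also admissible
and `f` takes different values at the two points. -/
def charGraphI {k : ℕ} {𝒳 : Fin k → Type*} {Z : Type*}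
    (f : (∀ i, 𝒳 i) → Z) (p : (∀ i, 𝒳 i) → ℝ) (i : Fin k) : SimpleGraph (𝒳 i) where
  Adj a b := a ≠ b ∧ ∃ x : ∀ j, 𝒳 j, x i = a ∧ 0 < p x ∧ 0 < p (Function.update x i b) ∧
      f x ≠ f (Function.update x i b)
  symm := by
    refine ⟨?_⟩
    rintro a b ⟨hab, x, hxi, hpx, hpx', hf⟩
    have h1 : Function.update (Function.update x i b) i a = x := by
      rw [Function.update_idem, ← hxi, Function.update_eq_self]
    refine ⟨hab.symm, Function.update x i b, by simp, hpx', ?_, ?_⟩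
    · rw [h1]; exact hpx
    · rw [h1]; exact hf.symm
  loopless := by
    refine ⟨?_⟩
    rintro a ⟨h, -⟩
    exact h rfl

/-- Two points differ in exactly one coordinate. -/
def DifferAtOne {k : ℕ} {𝒳 : Fin k → Type*} (x x' : ∀ i, 𝒳 i) : Prop :=
  ∃ i, x i ≠ x' i ∧ ∀ j, j ≠ i → x j = x' j

/-- A path within a joint coloring class from `x` to `x'`: a finite sequence of admissible
points starting at `x` and ending at `x'`, all having the same color tuple as `x`, in which
any two consecutive points differ in exactly one coordinate. -/
def JointClassPath {k : ℕ} {𝒳 : Fin k → Type*} {C : Fin k → Type*}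
    (p : (∀ i, 𝒳 i) → ℝ) (c : ∀ i, 𝒳 i → C i) (x x' : ∀ i, 𝒳 i) : Prop :=
  ∃ (m : ℕ) (w : Fin (m + 1) → ∀ i, 𝒳 i),
    w 0 = x ∧ w (Fin.last m) = x' ∧ (∀ t, 0 < p (w t)) ∧
    (∀ t i, c i (w t i) = c i (x i)) ∧
    ∀ t : Fin m, DifferAtOne (w t.castSucc) (w t.succ)


/-- The colorings `c i` satisfy the coloring connectivity condition (C.C.C.): any two
admissible points in the same joint coloring class either have the same `f`-value or are
joined by a path within that joint coloring class. -/
def CCC {k : ℕ} {𝒳 : Fin k → Type*} {Z : Type*} {C : Fin k → Type*}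
    (f : (∀ i, 𝒳 i) → Z) (p : (∀ i, 𝒳 i) → ℝ) (c : ∀ i, 𝒳 i → C i) : Prop :=
  ∀ x x' : ∀ i, 𝒳 i, 0 < p x → 0 < p x' → (∀ i, c i (x i) = c i (x' i)) →
    f x = f x' ∨ JointClassPath p c x x'

/-! Two admissible points that differ only in coordinate `i` and have the same colors cannot have
different `f`-values, since otherwise their `i`-th coordinates would be adjacent in `G_i` and yet
equally colored. Walking along a path inside a joint coloring class therefore never changes `f`,
so by C.C.C. `f` is constant on the admissible points of every joint coloring class, and `f̂` is
obtained by extending `f` along the coloring map. -/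

section

variable {k : ℕ} {𝒳 : Fin k → Type*} {Z : Type*} {C : Fin k → Type*}
  {f : (∀ i, 𝒳 i) → Z} {p : (∀ i, 𝒳 i) → ℝ} {c : ∀ i, 𝒳 i → C i}

theorem charGraphI_adj_of_differAtOne {x x' : ∀ i, 𝒳 i} {i : Fin k} (hx : 0 < p x)
    (hx' : 0 < p x') (hne : x i ≠ x' i) (hrest : ∀ j, j ≠ i → x j = x' j) (hf : f x ≠ f x') :
    (charGraphI f p i).Adj (x i) (x' i) := by
  have hupd : Function.update x i (x' i) = x' := Function.update_eq_iff.mpr ⟨rfl, hrest⟩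
  rw [← hupd] at hx' hf
  exact ⟨hne, x, rfl, hx, hx', hf⟩

theorem apply_eq_of_differAtOne (hc : ∀ i, ∀ a b, (charGraphI f p i).Adj a b → c i a ≠ c i b)
    {x x' : ∀ i, 𝒳 i} (hx : 0 < p x) (hx' : 0 < p x') (hcol : ∀ i, c i (x i) = c i (x' i))
    (hd : DifferAtOne x x') : f x = f x' := by
  obtain ⟨i, hne, hrest⟩ := hd
  by_contra hf
  exact hc i _ _ (charGraphI_adj_of_differAtOne hx hx' hne hrest hf) (hcol i)

theorem JointClassPath.apply_eq (hc : ∀ i, ∀ a b, (charGraphI f p i).Adj a b → c i a ≠ c i b)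
    {x x' : ∀ i, 𝒳 i} (h : JointClassPath p c x x') : f x = f x' := by
  obtain ⟨m, w, rfl, rfl, hadm, hcol, hd⟩ := h
  have hconst : ∀ t : Fin (m + 1), f (w 0) = f (w t) := by
    intro t
    induction t using Fin.induction with
    | zero => rfl
    | succ t ih =>
      refine ih.trans (apply_eq_of_differAtOne hc (hadm _) (hadm _) (fun i => ?_) (hd t))
      rw [hcol t.castSucc i, hcol t.succ i]
  exact hconst (Fin.last m)

theorem CCC.apply_eq (hc : ∀ i, ∀ a b, (charGraphI f p i).Adj a b → c i a ≠ c i b)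
    (hccc : CCC f p c) {x x' : ∀ i, 𝒳 i} (hx : 0 < p x) (hx' : 0 < p x')
    (hcol : ∀ i, c i (x i) = c i (x' i)) : f x = f x' :=
  (hccc x x' hx hx' hcol).elim id (JointClassPath.apply_eq hc)

end

theorem stmt10_general {k : ℕ} {𝒳 : Fin k → Type*}
    [∀ i, Nonempty (𝒳 i)] {Z : Type*} {C : Fin k → Type*}
    (f : (∀ i, 𝒳 i) → Z) (p : (∀ i, 𝒳 i) → ℝ)
    (c : ∀ i, 𝒳 i → C i)
    (hc : ∀ i, ∀ a b, (charGraphI f p i).Adj a b → c i a ≠ c i b)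
    (hccc : CCC f p c) :
    ∃ fhat : (∀ i, C i) → Z, ∀ x : ∀ i, 𝒳 i, 0 < p x →
      fhat (fun i => c i (x i)) = f x := by
  let colors : {x // 0 < p x} → ∀ i, C i := fun x i => c i (x.1 i)
  have hfactor : (fun x : {x // 0 < p x} => f x.1).FactorsThrough colors :=
    fun x x' hcol => hccc.apply_eq hc x.2 x'.2 (congrFun hcol)
  have : Nonempty Z := .map f inferInstance
  exact ⟨Function.extend colors (fun x => f x.1) fun _ => Classical.arbitrary Z,
    fun x hx => hfactor.extend_apply _ ⟨x, hx⟩⟩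

/-- If each `c i` is a proper coloring of the characteristic graph `G_i` and the colorings
satisfy C.C.C., then there is a function `f̂` on color tuples which recovers `f` at every
admissible point. -/
theorem stmt10 {k : ℕ} (hk : 0 < k) {𝒳 : Fin k → Type*} [∀ i, Fintype (𝒳 i)]
    [∀ i, Nonempty (𝒳 i)] {Z : Type*} {C : Fin k → Type*}
    (f : (∀ i, 𝒳 i) → Z) (p : (∀ i, 𝒳 i) → ℝ) (hp : ∀ x, 0 ≤ p x)
    (c : ∀ i, 𝒳 i → C i)
    (hc : ∀ i, ∀ a b, (charGraphI f p i).Adj a b → c i a ≠ c i b)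
    (hccc : CCC f p c) :
    ∃ fhat : (∀ i, C i) → Z, ∀ x : ∀ i, 𝒳 i, 0 < p x →
      fhat (fun i => c i (x i)) = f x :=
  stmt10_general f p c hc hccc
end

section
/- Suppose p x y > 0 for all x ∈ 𝒳₁ and y ∈ 𝒳₂ (full support). If c₁ : 𝒳₁ → C₁ is a proper coloring of the characteristic graph G_{X₁} and c₂ : 𝒳₂ → C₂ is a proper coloring of the characteristic graph G_{X₂}, then the map (a, b) ↦ (c₁ a, c₂ b) is a proper coloring of the joint characteristic graph G_{X₁,X₂}; that is, any pair of colorings of G_{X₁} and G_{X₂} can be viewed as a coloring of G_{X₁,X₂}. -/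
/-- The characteristic graph `G_{X₂}` of `X₂` with respect to `X₁`, `p`, and `f`. -/
def charGraph2 {X1 X2 Z : Type*} (f : X1 → X2 → Z) (p : X1 → X2 → ℝ) : SimpleGraph X2 where
  Adj b b' := b ≠ b' ∧ ∃ x, 0 < p x b ∧ 0 < p x b' ∧ f x b ≠ f x b'
  symm := by
    constructor
    rintro b b' ⟨hne, x, h1, h2, h3⟩
    exact ⟨hne.symm, x, h2, h1, h3.symm⟩
  loopless := by
    constructor
    rintro b ⟨h, -⟩
    exact h rfl

/-- The characteristic graph `G_{X₁,X₂}` of the joint source `(X₁, X₂)` with respect to `f`: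
distinct pairs `(a, b)` and `(a', b')` are adjacent iff `f a b ≠ f a' b'`. -/
def jointCharGraph {X1 X2 Z : Type*} (f : X1 → X2 → Z) : SimpleGraph (X1 × X2) where
  Adj q q' := q ≠ q' ∧ f q.1 q.2 ≠ f q'.1 q'.2
  symm := by
    constructor
    rintro q q' ⟨hne, h⟩
    exact ⟨hne.symm, h.symm⟩
  loopless := by
    constructor
    rintro q ⟨h, -⟩
    exact h rfl

theorem charGraph.apply_eq_of_not_adj {X1 X2 Z : Type*} {f : X1 → X2 → Z} {p : X1 → X2 → ℝ}
    {a a' : X1} {y : X2} (ha : 0 < p a y) (ha' : 0 < p a' y) (h : ¬(charGraph f p).Adj a a') :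
    f a y = f a' y := by
  by_contra hf
  have hne : a ≠ a' := by rintro rfl; exact hf rfl
  exact h ⟨hne, y, ha, ha', hf⟩

theorem charGraph2.apply_eq_of_not_adj {X1 X2 Z : Type*} {f : X1 → X2 → Z} {p : X1 → X2 → ℝ}
    {b b' : X2} {x : X1} (hb : 0 < p x b) (hb' : 0 < p x b') (h : ¬(charGraph2 f p).Adj b b') :
    f x b = f x b' := by
  by_contra hf
  have hne : b ≠ b' := by rintro rfl; exact hf rfl
  exact h ⟨hne, x, hb, hb', hf⟩

theorem stmt15_general {X1 X2 Z C₁ C₂ : Type*}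
    (f : X1 → X2 → Z) (p : X1 → X2 → ℝ) (hp : ∀ x y, 0 < p x y)
    (c₁ : X1 → C₁) (hc₁ : ∀ a b, (charGraph f p).Adj a b → c₁ a ≠ c₁ b)
    (c₂ : X2 → C₂) (hc₂ : ∀ b b', (charGraph2 f p).Adj b b' → c₂ b ≠ c₂ b') :
    ∀ q q' : X1 × X2, (jointCharGraph f).Adj q q' →
      (c₁ q.1, c₂ q.2) ≠ (c₁ q'.1, c₂ q'.2) := by
  rintro ⟨a, b⟩ ⟨a', b'⟩ ⟨-, hf⟩ hc
  obtain ⟨h₁, h₂⟩ := Prod.mk.inj hc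
  have hrow : f a b = f a' b :=
    charGraph.apply_eq_of_not_adj (hp a b) (hp a' b) fun hadj => hc₁ a a' hadj h₁
  have hcol : f a' b = f a' b' :=
    charGraph2.apply_eq_of_not_adj (hp a' b) (hp a' b') fun hadj => hc₂ b b' hadj h₂
  exact hf (hrow.trans hcol)

/-- Under full support, a pair of proper colorings of `G_{X₁}` and `G_{X₂}` yields a proper
coloring `(a, b) ↦ (c₁ a, c₂ b)` of the joint characteristic graph `G_{X₁,X₂}`. -/
theorem stmt15 {X1 X2 Z C₁ C₂ : Type*} [Fintype X1] [Nonempty X1] [Fintype X2] [Nonempty X2]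
    (f : X1 → X2 → Z) (p : X1 → X2 → ℝ) (hp : ∀ x y, 0 < p x y)
    (c₁ : X1 → C₁) (hc₁ : ∀ a b, (charGraph f p).Adj a b → c₁ a ≠ c₁ b)
    (c₂ : X2 → C₂) (hc₂ : ∀ b b', (charGraph2 f p).Adj b b' → c₂ b ≠ c₂ b') :
    ∀ q q' : X1 × X2, (jointCharGraph f).Adj q q' →
      (c₁ q.1, c₂ q.2) ≠ (c₁ q'.1, c₂ q'.2) :=
  stmt15_general f p hp c₁ hc₁ c₂ hc₂
end
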